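/- If f is continuous on [0,r_1] with f(r) = O(r^n) as r → 0⁺, then F[f](r) = O(r^{n+2}) as r → 0⁺, where F[f](r) = r^n ∫_0^r x^{-(2n+1)} (∫_0^x y^{n+1} f(y) dy) dx. -/

import Mathlib

/-! Each of the two integrations in `F[f]` gains one power of the variable against a monomial
majorant: `|y^{n+1} f y| ≤ C y^{2n+1}` integrates to `C/(2n+2) · x^{2n+2}`, dividing by `x^{2n+1}`
leaves a linear majorant, and that integrates to a quadratic one. No integrability of the
integrands is required, because `‖∫ g‖ ≤ |∫ h|` holds whenever `‖g‖ ≤ h` with `h` integrable. -/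

open MeasureTheory intervalIntegral Set

/-- The integral operator `F[f](r) = r^n ∫_0^r x^{-(2n+1)} (∫_0^x y^{n+1} f(y) dy) dx`. -/
noncomputable def graetzF (n : ℕ) (f : ℝ → ℝ) : ℝ → ℝ :=
  fun r => r ^ n * ∫ x in (0:ℝ)..r, (x ^ (2 * n + 1))⁻¹ * ∫ y in (0:ℝ)..x, y ^ (n + 1) * f y

theorem abs_intervalIntegral_le_of_abs_le_mul_pow {g : ℝ → ℝ} {a K : ℝ} {k : ℕ} (ha : 0 ≤ a)
    (hK : 0 ≤ K) (hg : ∀ y ∈ Ioc 0 a, |g y| ≤ K * y ^ k) :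
    |∫ y in (0:ℝ)..a, g y| ≤ K / (k + 1) * a ^ (k + 1) := by
  have hmajor : IntervalIntegrable (fun y => K * y ^ k) volume 0 a :=
    (continuous_const.mul (continuous_pow k)).intervalIntegrable _ _
  calc |∫ y in (0:ℝ)..a, g y| ≤ |∫ y in (0:ℝ)..a, K * y ^ k| := by
        refine norm_integral_le_abs_of_norm_le (f := g) ?_ hmajor
        filter_upwards [ae_restrict_mem measurableSet_uIoc] with y hy
        rw [uIoc_of_le ha] at hy
        exact hg y hy
    _ = K / (k + 1) * a ^ (k + 1) := by
        rw [intervalIntegral.integral_const_mul, integral_pow, zero_pow k.succ_ne_zero, sub_zero,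
          abs_of_nonneg (by positivity)]
        ring

theorem abs_pow_inv_mul_integral_pow_mul_le {n : ℕ} {f : ℝ → ℝ} {C x : ℝ} (hx : 0 < x)
    (hC : 0 ≤ C) (hf : ∀ y ∈ Ioc 0 x, |f y| ≤ C * y ^ n) :
    |(x ^ (2 * n + 1))⁻¹ * ∫ y in (0:ℝ)..x, y ^ (n + 1) * f y| ≤ C / (2 * n + 2) * x ^ 1 := by
  have hmajor : ∀ y ∈ Ioc 0 x, |y ^ (n + 1) * f y| ≤ C * y ^ (2 * n + 1) := fun y hy => by
    rw [abs_mul, abs_of_nonneg (pow_nonneg hy.1.le _)]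
    calc y ^ (n + 1) * |f y| ≤ y ^ (n + 1) * (C * y ^ n) :=
          mul_le_mul_of_nonneg_left (hf y hy) (pow_nonneg hy.1.le _)
      _ = C * y ^ (2 * n + 1) := by ring
  have hinner : |∫ y in (0:ℝ)..x, y ^ (n + 1) * f y| ≤ C / (2 * n + 2) * x ^ (2 * n + 2) := by
    convert abs_intervalIntegral_le_of_abs_le_mul_pow hx.le hC hmajor using 3
    push_cast
    ring
  rw [abs_mul, abs_inv, abs_of_pos (pow_pos hx _)]
  calc (x ^ (2 * n + 1))⁻¹ * |∫ y in (0:ℝ)..x, y ^ (n + 1) * f y|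
      ≤ (x ^ (2 * n + 1))⁻¹ * (C / (2 * n + 2) * x ^ (2 * n + 2)) := by gcongr
    _ = C / (2 * n + 2) * x ^ 1 := by field_simp; ring

theorem stmt6_general (n : ℕ) (r₁ : ℝ) (f : ℝ → ℝ)
    (C : ℝ) (hC : 0 < C)
    (hbound : ∀ r ∈ Set.Ioc (0:ℝ) r₁, |f r| ≤ C * r ^ n) :
    ∃ C' > 0, ∀ r ∈ Set.Ioc (0:ℝ) r₁, |graetzF n f r| ≤ C' * r ^ (n + 2) := by
  refine ⟨C / (4 * n + 4), by positivity, fun r hr => ?_⟩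
  have hr0 : 0 < r := hr.1
  have houter := abs_intervalIntegral_le_of_abs_le_mul_pow hr0.le (by positivity)
    fun x hx => abs_pow_inv_mul_integral_pow_mul_le hx.1 hC.le
      fun y hy => hbound y ⟨hy.1, hy.2.trans (hx.2.trans hr.2)⟩
  rw [graetzF, abs_mul, abs_of_pos (pow_pos hr0 _)]
  calc r ^ n * |∫ x in (0:ℝ)..r, (x ^ (2 * n + 1))⁻¹ * ∫ y in (0:ℝ)..x, y ^ (n + 1) * f y|
      ≤ r ^ n * (C / (2 * n + 2) / ((1 : ℕ) + 1) * r ^ (1 + 1)) := by gcongr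
    _ = C / (4 * n + 4) * r ^ (n + 2) := by push_cast; field_simp; ring

theorem stmt6 (n : ℕ) (r₁ : ℝ) (hr₁ : 0 < r₁) (f : ℝ → ℝ)
    (hc : ContinuousOn f (Set.Ioc 0 r₁)) (C : ℝ) (hC : 0 < C)
    (hbound : ∀ r ∈ Set.Ioc (0:ℝ) r₁, |f r| ≤ C * r ^ n) :
    ∃ C' > 0, ∀ r ∈ Set.Ioc (0:ℝ) r₁, |graetzF n f r| ≤ C' * r ^ (n + 2) :=
  stmt6_general n r₁ f C hC hbound
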